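/- Let k ≥ 2, and set u = n if k = 2n + 1 and u = n − 1 if k = 2n. Let V be a finite-dimensional real vector space and θ a linear endomorphism of V with θ^k = id and ker(θ − id) = 0. For ζ = (ζ₁, …, ζ_u) with each ζ_j ∈ {−1, 0, 1}, define f_ζ = (2/k) · Σ_{m=1}^{u} ( Σ_{j=1}^{u} ζ_j · sin(2πmj/k) ) · (θ^m − θ^{k−m}). Then: (a) f_ζ³ + f_ζ = 0 for every such ζ; (b) every f ∈ ℝ[θ] satisfying f³ + f = 0 equals f_ζ for some ζ ∈ {−1,0,1}^u; (c) if −1 is not an eigenvalue of θ and all ζ_j ∈ {−1, 1}, then f_ζ² = −id. -/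

import Mathlib

/-- The canonical operator
f_ζ = (2/k) Σ_{m=1}^{u} ( Σ_{j=1}^{u} ζ_j sin(2πmj/k) ) (θ^m − θ^{k−m}). -/
noncomputable def fzeta {V : Type*} [AddCommGroup V] [Module ℝ V]
    (θ : Module.End ℝ V) (k u : ℕ) (ζ : ℕ → ℝ) : Module.End ℝ V :=
  (2 / (k : ℝ)) •
    ∑ m ∈ Finset.Icc 1 u,
      (∑ j ∈ Finset.Icc 1 u,
        ζ j * Real.sin (2 * Real.pi * (m : ℝ) * (j : ℝ) / (k : ℝ))) •
      (θ ^ m - θ ^ (k - m))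

/-! Since `θ ^ k = 1`, the minimal polynomial of `θ` divides `X ^ k - 1`, so it is separable and its
complex roots are powers `ω ^ l` of `ω = exp (2πi / k)`; a real polynomial `q` therefore kills `θ`
as soon as `q (ω ^ l) = 0` at each of these roots. Write `f_ζ = P_ζ(θ)`. Orthogonality of the
discrete sines `sin (2π m j / k)` gives `P_ζ(ω ^ l) = i ζ' l`, where `ζ'` is the odd `k`-periodic
extension of `ζ`; it vanishes at `l = 0` and `l = k / 2`, where `ω ^ l = ±1`. Then (a) and (c) are
the identities `(i x)³ + i x = 0` for `x ∈ {-1, 0, 1}` and `(i x)² = -1` for `x = ±1`, the roots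
`±1` being excluded in (c) by the eigenvalue hypotheses. For (b), `p (ω ^ l) ∈ {0, ±i}` at each
root, and `ζ j := Im p (ω ^ j)` works because `ω ^ (k - l)` is the conjugate of `ω ^ l`. -/

section

open Polynomial Finset Complex
open scoped Real ComplexConjugate

theorem Polynomial.Separable.dvd_of_forall_aeval_eq_zero {K L : Type*} [Field K] [Field L]
    [IsAlgClosed L] [Algebra K L] {p q : K[X]} (hp : p.Separable)
    (h : ∀ z : L, aeval z p = 0 → aeval z q = 0) : p ∣ q := by
  rcases eq_or_ne q 0 with rfl | hq
  · exact dvd_zero p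
  rw [← map_dvd_map' (algebraMap K L), IsAlgClosed.dvd_iff_roots_le_roots
    (map_ne_zero hp.ne_zero) (map_ne_zero hq), Multiset.le_iff_subset (nodup_roots hp.map)]
  intro z hz
  rw [mem_roots (map_ne_zero hq), IsRoot, eval_map_algebraMap]
  exact h z (by simpa [eval_map_algebraMap] using (mem_roots (map_ne_zero hp.ne_zero)).1 hz)

theorem Finset.sum_range_eq_add_sum_Icc_add_sum_Icc_sub {M : Type*} [AddCommMonoid M] {k u : ℕ}
    (hu : k = 2 * u + 1 ∨ k = 2 * u + 2) (g : ℕ → M) :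
    ∑ m ∈ range k, g m =
      g 0 + ∑ m ∈ Icc 1 u, (g m + g (k - m)) + if k = 2 * u + 2 then g (u + 1) else 0 := by
  have hmid : ∑ m ∈ Ico (u + 1) (k - u), g m = if k = 2 * u + 2 then g (u + 1) else 0 := by
    rcases hu with rfl | rfl
    · simp [show 2 * u + 1 - u = u + 1 by omega]
    · simp [show 2 * u + 2 - u = u + 1 + 1 by omega]
  have hreflect : ∑ m ∈ Ico (k - u) k, g m = ∑ m ∈ Icc 1 u, g (k - m) := by
    rw [← Ico_add_one_right_eq_Icc, sum_Ico_reflect g 1 (by omega : u + 1 ≤ k + 1),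
      show k + 1 - (u + 1) = k - u by omega, Nat.add_sub_cancel]
  rw [range_eq_Ico, ← sum_Ico_consecutive g (Nat.zero_le (k - u)) (by omega : k - u ≤ k),
    ← sum_Ico_consecutive g (Nat.zero_le (u + 1)) (by omega : u + 1 ≤ k - u),
    ← sum_Ico_consecutive g (Nat.zero_le 1) (by omega : 1 ≤ u + 1), hmid, hreflect,
    Ico_add_one_right_eq_Icc, sum_add_distrib]
  simp only [Nat.Ico_zero_eq_range, range_one, sum_singleton]
  abel

namespace FStructure

noncomputable def unitRoot (k : ℕ) : ℂ := exp (2 * π * I / k)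

variable {k u : ℕ}

theorem isPrimitiveRoot_unitRoot (hk : k ≠ 0) : IsPrimitiveRoot (unitRoot k) k :=
  isPrimitiveRoot_exp k hk

theorem unitRoot_pow (k n : ℕ) : unitRoot k ^ n = exp ((2 * π * n / k : ℝ) * I) := by
  rw [unitRoot, ← exp_nat_mul]
  push_cast
  ring_nf

theorem unitRoot_pow_sub (hk : k ≠ 0) {m : ℕ} (hm : m ≤ k) :
    unitRoot k ^ (k - m) = conj (unitRoot k ^ m) := by
  have hmul : unitRoot k ^ (k - m) * unitRoot k ^ m = 1 := by
    rw [← pow_add, Nat.sub_add_cancel hm, (isPrimitiveRoot_unitRoot hk).pow_eq_one]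
  rw [eq_inv_of_mul_eq_one_left hmul, unitRoot_pow, ← exp_conj, ← Complex.exp_neg]
  simp [map_ofNat]

theorem unitRoot_pow_eq_neg_one (hk : k ≠ 0) {l : ℕ} (hl : 2 * l = k) : unitRoot k ^ l = -1 :=
  ((isPrimitiveRoot_unitRoot hk).pow (by omega) (by omega : k = l * 2)).eq_neg_one_of_two_right

theorem aeval_eq_zero_of_forall_unitRoot_pow {A : Type*} [Ring A] [Algebra ℝ A] {θ : A}
    (hk : k ≠ 0) (hθk : θ ^ k = 1) {q : ℝ[X]}
    (hq : ∀ l < k, aeval (unitRoot k ^ l) (minpoly ℝ θ) = 0 → aeval (unitRoot k ^ l) q = 0) :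
    aeval θ q = 0 := by
  have : NeZero k := ⟨hk⟩
  have hdvd : minpoly ℝ θ ∣ X ^ k - C 1 := minpoly.dvd ℝ θ (by simp [hθk])
  have hsep : (minpoly ℝ θ).Separable :=
    (separable_X_pow_sub_C 1 (Nat.cast_ne_zero.2 hk) one_ne_zero).of_dvd hdvd
  refine minpoly.dvd_iff.1 (hsep.dvd_of_forall_aeval_eq_zero (L := ℂ) fun z hz => ?_)
  have hzk : z ^ k = 1 := by
    simpa [sub_eq_zero] using aeval_eq_zero_of_dvd_aeval_eq_zero hdvd hz
  obtain ⟨l, hl, rfl⟩ := (isPrimitiveRoot_unitRoot hk).eq_pow_of_pow_eq_one hzk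
  exact hq l hl hz

theorem sum_range_cos_two_pi_mul_div (hk : k ≠ 0) (c : ℤ) :
    ∑ m ∈ range k, Real.cos (2 * π * m * c / k) = if (k : ℤ) ∣ c then (k : ℝ) else 0 := by
  have hω := isPrimitiveRoot_unitRoot hk
  have hterm : ∀ m : ℕ, Real.cos (2 * π * m * c / k) = ((unitRoot k ^ c) ^ m).re := by
    intro m
    rw [← zpow_natCast, ← zpow_mul, unitRoot, ← exp_int_mul, ← exp_ofReal_mul_I_re]
    push_cast
    ring_nf
  simp only [hterm, ← re_sum]
  split_ifs with hdvd
  · simp [(hω.zpow_eq_one_iff_dvd c).2 hdvd]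
  · have hne : unitRoot k ^ c ≠ 1 := mt (hω.zpow_eq_one_iff_dvd c).1 hdvd
    have hpow : (unitRoot k ^ c) ^ k = 1 := by
      rw [← zpow_natCast, ← zpow_mul, mul_comm, zpow_mul, zpow_natCast, hω.pow_eq_one, one_zpow]
    simp [geom_sum_eq hne, hpow]

theorem sin_two_pi_mul_sub_div (hk : k ≠ 0) {m : ℕ} (hm : m ≤ k) (j : ℕ) :
    Real.sin (2 * π * ↑(k - m) * j / k) = -Real.sin (2 * π * m * j / k) := by
  rw [← Real.sin_nat_mul_two_pi_sub _ j]
  congr 1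
  have : (k : ℝ) ≠ 0 := Nat.cast_ne_zero.2 hk
  push_cast [hm]
  field_simp

theorem sum_Icc_sin_mul_sin (hu : k = 2 * u + 1 ∨ k = 2 * u + 2) (j l : ℕ) :
    ∑ m ∈ Icc 1 u, Real.sin (2 * π * m * j / k) * Real.sin (2 * π * m * l / k) =
      k / 4 * ((if (k : ℤ) ∣ (j : ℤ) - l then 1 else 0) -
        if (k : ℤ) ∣ (j : ℤ) + l then 1 else 0) := by
  have hk : k ≠ 0 := by omega
  set g : ℕ → ℝ := fun m => Real.sin (2 * π * m * j / k) * Real.sin (2 * π * m * l / k)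
  have hmid : k = 2 * u + 2 → g (u + 1) = 0 := by
    intro h
    have hj : 2 * π * ↑(u + 1) * j / k = j * π := by
      rw [h]; push_cast; field_simp
    simp only [g, hj, Real.sin_nat_mul_pi, zero_mul]
  have hfold : ∑ m ∈ range k, g m = 2 * ∑ m ∈ Icc 1 u, g m := by
    have hsymm : ∀ m ∈ Icc 1 u, g m + g (k - m) = 2 * g m := fun m hm => by
      have hmk : m ≤ k := by simp only [mem_Icc] at hm; omega
      simp only [g, sin_two_pi_mul_sub_div hk hmk]
      ring
    rw [sum_range_eq_add_sum_Icc_add_sum_Icc_sub hu, sum_congr rfl hsymm, ← mul_sum]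
    split_ifs with h
    · rw [hmid h]; simp [g]
    · simp [g]
  have hcos : 2 * ∑ m ∈ range k, g m =
      ∑ m ∈ range k, Real.cos (2 * π * m * (((j : ℤ) - l : ℤ) : ℝ) / k)
        - ∑ m ∈ range k, Real.cos (2 * π * m * (((j : ℤ) + l : ℤ) : ℝ) / k) := by
    rw [mul_sum, ← sum_sub_distrib]
    refine sum_congr rfl fun m _ => ?_
    rw [← mul_assoc, Real.two_mul_sin_mul_sin]
    push_cast
    ring_nf
  rw [sum_range_cos_two_pi_mul_div hk, sum_range_cos_two_pi_mul_div hk, hfold] at hcos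
  split_ifs at hcos ⊢ <;> linarith

noncomputable def sineCoeff (k u : ℕ) (ζ : ℕ → ℝ) (m : ℕ) : ℝ :=
  ∑ j ∈ Icc 1 u, ζ j * Real.sin (2 * π * m * j / k)

noncomputable def fzetaPoly (k u : ℕ) (ζ : ℕ → ℝ) : ℝ[X] :=
  (2 / (k : ℝ)) • ∑ m ∈ Icc 1 u, sineCoeff k u ζ m • (X ^ m - X ^ (k - m))

theorem aeval_fzetaPoly {V : Type*} [AddCommGroup V] [Module ℝ V] (θ : Module.End ℝ V)
    (ζ : ℕ → ℝ) : aeval θ (fzetaPoly k u ζ) = fzeta θ k u ζ := by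
  simp [fzetaPoly, fzeta, sineCoeff]

noncomputable def oddExtension (k u : ℕ) (ζ : ℕ → ℝ) (l : ℕ) : ℝ :=
  (if l ∈ Icc 1 u then ζ l else 0) - if k - l ∈ Icc 1 u then ζ (k - l) else 0

theorem sum_Icc_mul_ite_dvd_eq_oddExtension (hu : k = 2 * u + 1 ∨ k = 2 * u + 2)
    (ζ : ℕ → ℝ) {l : ℕ} (hl : l < k) :
    ∑ j ∈ Icc 1 u, ζ j * ((if (k : ℤ) ∣ (j : ℤ) - l then 1 else 0) -
      if (k : ℤ) ∣ (j : ℤ) + l then 1 else 0) = oddExtension k u ζ l := by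
  have hminus : ∀ j ∈ Icc 1 u, (k : ℤ) ∣ (j : ℤ) - l ↔ j = l := fun j hj => by
    simp only [mem_Icc] at hj
    constructor
    · intro h
      have := Int.eq_zero_of_abs_lt_dvd h (by rw [abs_lt]; omega)
      omega
    · rintro rfl; simp
  have hplus : ∀ j ∈ Icc 1 u, (k : ℤ) ∣ (j : ℤ) + l ↔ j = k - l := fun j hj => by
    simp only [mem_Icc] at hj
    constructor
    · intro h
      have := Int.eq_zero_of_abs_lt_dvd (dvd_sub_self_right.2 h) (by rw [abs_lt]; omega)
      omega
    · intro h; exact ⟨1, by omega⟩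
  simp only [mul_sub, mul_ite, mul_one, mul_zero, sum_sub_distrib]
  rw [sum_congr rfl fun j hj => if_congr (hminus j hj) rfl rfl,
    sum_congr rfl fun j hj => if_congr (hplus j hj) rfl rfl, sum_ite_eq', sum_ite_eq',
    oddExtension]

theorem four_div_mul_sum_sineCoeff_mul_sin (hu : k = 2 * u + 1 ∨ k = 2 * u + 2) (ζ : ℕ → ℝ)
    {l : ℕ} (hl : l < k) :
    4 / k * ∑ m ∈ Icc 1 u, sineCoeff k u ζ m * Real.sin (2 * π * m * l / k) =
      oddExtension k u ζ l := by
  have hk : (k : ℝ) ≠ 0 := Nat.cast_ne_zero.2 (by omega)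
  calc _ = ∑ j ∈ Icc 1 u, ζ j * (4 / k * ∑ m ∈ Icc 1 u,
        Real.sin (2 * π * m * j / k) * Real.sin (2 * π * m * l / k)) := by
        simp only [sineCoeff, sum_mul, mul_sum]
        rw [sum_comm]
        exact sum_congr rfl fun j _ => sum_congr rfl fun m _ => by ring
    _ = _ := by
        rw [← sum_Icc_mul_ite_dvd_eq_oddExtension hu ζ hl]
        exact sum_congr rfl fun j _ => by rw [sum_Icc_sin_mul_sin hu]; field_simp

theorem unitRoot_pow_pow_sub_pow_pow_sub (hk : k ≠ 0) (l : ℕ) {m : ℕ} (hm : m ≤ k) :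
    (unitRoot k ^ l) ^ m - (unitRoot k ^ l) ^ (k - m) =
      (2 * Real.sin (2 * π * m * l / k) : ℝ) * I := by
  rw [← pow_mul, ← pow_mul, mul_comm l, mul_comm l (k - m), pow_mul,
    pow_mul (unitRoot k) (k - m), unitRoot_pow_sub hk hm, ← map_pow, sub_conj, ← pow_mul,
    unitRoot_pow, exp_ofReal_mul_I_im]
  push_cast
  ring_nf

theorem aeval_unitRoot_pow_fzetaPoly (hu : k = 2 * u + 1 ∨ k = 2 * u + 2) (ζ : ℕ → ℝ) {l : ℕ}
    (hl : l < k) : aeval (unitRoot k ^ l) (fzetaPoly k u ζ) = I * oddExtension k u ζ l := by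
  rw [← four_div_mul_sum_sineCoeff_mul_sin hu ζ hl]
  simp only [fzetaPoly, map_smul, map_sum, aeval_X, map_sub, map_pow]
  rw [sum_congr rfl fun m hm => by
    rw [unitRoot_pow_pow_sub_pow_pow_sub (by omega) l (by simp only [mem_Icc] at hm; omega)]]
  simp only [Complex.real_smul, Complex.ofReal_mul, Complex.ofReal_sum, mul_sum]
  push_cast
  exact sum_congr rfl fun m _ => by ring

theorem oddExtension_cases (hu : k = 2 * u + 1 ∨ k = 2 * u + 2) (ζ : ℕ → ℝ) {l : ℕ}
    (hl : l < k) :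
    (l ∈ Icc 1 u ∧ oddExtension k u ζ l = ζ l) ∨
      (k - l ∈ Icc 1 u ∧ oddExtension k u ζ l = -ζ (k - l)) ∨
      (oddExtension k u ζ l = 0 ∧ (l = 0 ∨ 2 * l = k)) := by
  unfold oddExtension
  by_cases h₁ : l ∈ Icc 1 u
  · have h₂ : k - l ∉ Icc 1 u := by simp only [mem_Icc] at h₁ ⊢; omega
    simp [h₁, h₂]
  by_cases h₂ : k - l ∈ Icc 1 u
  · simp [h₁, h₂]
  · simp only [mem_Icc] at h₁ h₂
    simp only [mem_Icc, h₁, h₂, if_false, sub_zero, true_and]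
    omega

theorem exists_unitRoot_pow_eq_ofReal (hk : k ≠ 0) {l : ℕ} (hl : l = 0 ∨ 2 * l = k) :
    ∃ r : ℝ, (r = 1 ∨ r = -1) ∧ unitRoot k ^ l = r := by
  rcases hl with rfl | hl
  · exact ⟨1, Or.inl rfl, by simp⟩
  · exact ⟨-1, Or.inr rfl, by simp [unitRoot_pow_eq_neg_one hk hl]⟩

theorem eq_I_mul_im_of_pow_three_add_self_eq_zero {z : ℂ} (h : z ^ 3 + z = 0) :
    z = I * z.im ∧ (z.im = -1 ∨ z.im = 0 ∨ z.im = 1) := by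
  have hfactor : z * (z - I) * (z + I) = 0 := by linear_combination h - z * I_sq
  rcases mul_eq_zero.1 hfactor with h | h
  · rcases mul_eq_zero.1 h with h | h
    · simp [h]
    · simp [sub_eq_zero.1 h]
  · simp [eq_neg_of_add_eq_zero_left h]

-- `Polynomial.aeval_ofReal` is phrased with `RCLike.ofReal`, which `rw` does not match here.
theorem aeval_ofReal_eq_ofReal_eval (p : ℝ[X]) (r : ℝ) :
    aeval (r : ℂ) p = ((p.eval r : ℝ) : ℂ) :=
  aeval_ofReal p r

theorem hasEigenvalue_of_aeval_ofReal_minpoly {V : Type*} [AddCommGroup V] [Module ℝ V]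
    [FiniteDimensional ℝ V] {θ : Module.End ℝ V} {r : ℝ}
    (h : aeval (r : ℂ) (minpoly ℝ θ) = 0) : θ.HasEigenvalue r := by
  refine Module.End.hasEigenvalue_of_isRoot ?_
  rw [IsRoot.def]
  exact_mod_cast (aeval_ofReal_eq_ofReal_eval _ r).symm.trans h

section Algebra

variable {A : Type*} [Ring A] [Algebra ℝ A] {θ : A}

theorem aeval_fzetaPoly_pow_three_add_self (hu : k = 2 * u + 1 ∨ k = 2 * u + 2) (hθk : θ ^ k = 1)
    {ζ : ℕ → ℝ} (hζ : ∀ j ∈ Icc 1 u, ζ j = -1 ∨ ζ j = 0 ∨ ζ j = 1) :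
    aeval θ (fzetaPoly k u ζ ^ 3 + fzetaPoly k u ζ) = 0 := by
  refine aeval_eq_zero_of_forall_unitRoot_pow (by omega) hθk fun l hl _ => ?_
  have hcube : (oddExtension k u ζ l : ℂ) ^ 3 = oddExtension k u ζ l := by
    norm_cast
    rcases oddExtension_cases hu ζ hl with ⟨hj, h⟩ | ⟨hj, h⟩ | ⟨h, -⟩ <;> rw [h]
    · rcases hζ _ hj with h' | h' | h' <;> norm_num [h']
    · rcases hζ _ hj with h' | h' | h' <;> norm_num [h']
    · norm_num
  rw [map_add, map_pow, aeval_unitRoot_pow_fzetaPoly hu ζ hl]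
  linear_combination -I * hcube + I * (oddExtension k u ζ l : ℂ) ^ 3 * I_sq

theorem exists_aeval_eq_aeval_fzetaPoly (hu : k = 2 * u + 1 ∨ k = 2 * u + 2) (hθk : θ ^ k = 1)
    {p : ℝ[X]} (hp : aeval θ (p ^ 3 + p) = 0) :
    ∃ ζ : ℕ → ℝ, (∀ j ∈ Icc 1 u, ζ j = -1 ∨ ζ j = 0 ∨ ζ j = 1) ∧
      aeval θ p = aeval θ (fzetaPoly k u ζ) := by
  have hk : k ≠ 0 := by omega
  have hroot : ∀ z : ℂ, aeval z (minpoly ℝ θ) = 0 → aeval z p ^ 3 + aeval z p = 0 :=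
    fun z hz => by simpa using aeval_eq_zero_of_dvd_aeval_eq_zero (minpoly.dvd ℝ θ hp) hz
  let ζ (j : ℕ) : ℝ :=
    if aeval (unitRoot k ^ j) (minpoly ℝ θ) = 0 then (aeval (unitRoot k ^ j) p).im else 0
  refine ⟨ζ, fun j _ => ?_, ?_⟩
  · by_cases h : aeval (unitRoot k ^ j) (minpoly ℝ θ) = 0
    · simpa [ζ, h] using (eq_I_mul_im_of_pow_three_add_self_eq_zero (hroot _ h)).2
    · simp [ζ, h]
  rw [← sub_eq_zero, ← map_sub]
  refine aeval_eq_zero_of_forall_unitRoot_pow hk hθk fun l hl hl₀ => ?_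
  rw [map_sub, aeval_unitRoot_pow_fzetaPoly hu ζ hl, sub_eq_zero,
    (eq_I_mul_im_of_pow_three_add_self_eq_zero (hroot _ hl₀)).1]
  congr 2
  rcases oddExtension_cases hu ζ hl with ⟨-, h⟩ | ⟨-, h⟩ | ⟨h, hl'⟩ <;> rw [h]
  · simp [ζ, hl₀]
  · have hconj : unitRoot k ^ (k - l) = conj (unitRoot k ^ l) := unitRoot_pow_sub hk hl.le
    have hl₀' : aeval (unitRoot k ^ (k - l)) (minpoly ℝ θ) = 0 := by
      rw [hconj, aeval_conj, hl₀, map_zero]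
    simp only [ζ, if_pos hl₀']
    rw [hconj, aeval_conj, conj_im, neg_neg]
  · obtain ⟨r, -, hr⟩ := exists_unitRoot_pow_eq_ofReal hk hl'
    rw [hr, aeval_ofReal_eq_ofReal_eval, ofReal_im]

end Algebra

theorem fzeta_sq_eq_neg_one {V : Type*} [AddCommGroup V] [Module ℝ V] [FiniteDimensional ℝ V]
    {θ : Module.End ℝ V} (hu : k = 2 * u + 1 ∨ k = 2 * u + 2) (hθk : θ ^ k = 1)
    (h₁ : ¬θ.HasEigenvalue 1) (h₂ : ¬θ.HasEigenvalue (-1)) {ζ : ℕ → ℝ}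
    (hζ : ∀ j ∈ Icc 1 u, ζ j = -1 ∨ ζ j = 1) : fzeta θ k u ζ ^ 2 = -1 := by
  have hk : k ≠ 0 := by omega
  have h : aeval θ (fzetaPoly k u ζ ^ 2 + 1) = 0 := by
    refine aeval_eq_zero_of_forall_unitRoot_pow hk hθk fun l hl hl₀ => ?_
    have hsq : (oddExtension k u ζ l : ℂ) ^ 2 = 1 := by
      norm_cast
      rcases oddExtension_cases hu ζ hl with ⟨hj, h⟩ | ⟨hj, h⟩ | ⟨-, hl'⟩
      · rcases hζ _ hj with h' | h' <;> norm_num [h, h']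
      · rcases hζ _ hj with h' | h' <;> norm_num [h, h']
      · obtain ⟨r, hr, hr'⟩ := exists_unitRoot_pow_eq_ofReal hk hl'
        have := hasEigenvalue_of_aeval_ofReal_minpoly (hr' ▸ hl₀)
        rcases hr with rfl | rfl
        exacts [absurd this h₁, absurd this h₂]
    rw [map_add, map_pow, map_one, aeval_unitRoot_pow_fzetaPoly hu ζ hl]
    linear_combination (oddExtension k u ζ l : ℂ) ^ 2 * I_sq - hsq
  rw [map_add, map_pow, map_one, aeval_fzetaPoly] at h
  exact eq_neg_of_add_eq_zero_left h

end FStructure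

end

theorem stmt_4 (V : Type*) [AddCommGroup V] [Module ℝ V] [FiniteDimensional ℝ V]
    (k u : ℕ) (hu : k = 2 * u + 1 ∨ k = 2 * u + 2)
    (θ : Module.End ℝ V) (hθk : θ ^ k = 1) (hθ : LinearMap.ker (θ - 1) = ⊥) :
    -- (a)
    (∀ ζ : ℕ → ℝ, (∀ j ∈ Finset.Icc 1 u, ζ j = -1 ∨ ζ j = 0 ∨ ζ j = 1) →
      (fzeta θ k u ζ) ^ 3 + fzeta θ k u ζ = 0) ∧
    -- (b)
    (∀ f : Module.End ℝ V, (∃ p : Polynomial ℝ, f = Polynomial.aeval θ p) →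
      f ^ 3 + f = 0 →
      ∃ ζ : ℕ → ℝ, (∀ j ∈ Finset.Icc 1 u, ζ j = -1 ∨ ζ j = 0 ∨ ζ j = 1) ∧
        f = fzeta θ k u ζ) ∧
    -- (c)
    (¬ Module.End.HasEigenvalue θ (-1) →
      ∀ ζ : ℕ → ℝ, (∀ j ∈ Finset.Icc 1 u, ζ j = -1 ∨ ζ j = 1) →
        (fzeta θ k u ζ) ^ 2 = -1) := by
  have h₁ : ¬θ.HasEigenvalue 1 := by
    rwa [Module.End.hasEigenvalue_iff, Module.End.eigenspace_def, one_smul, not_not]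
  refine ⟨fun ζ hζ => ?_, fun f ⟨p, hf⟩ hf₃ => ?_,
    fun h₂ ζ hζ => FStructure.fzeta_sq_eq_neg_one hu hθk h₁ h₂ hζ⟩
  · simpa [FStructure.aeval_fzetaPoly] using
      FStructure.aeval_fzetaPoly_pow_three_add_self hu hθk hζ
  · obtain ⟨ζ, hζ, h⟩ :=
      FStructure.exists_aeval_eq_aeval_fzetaPoly (p := p) hu hθk (by simpa [hf] using hf₃)
    exact ⟨ζ, hζ, by rw [hf, h, FStructure.aeval_fzetaPoly]⟩
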